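/- arXiv:1802.08037 — 4 statements merged into one kernel-verified Lean document; each statement's English description precedes it below -/
import Mathlib

section
/- Let m ∈ [0,1], let T : [0,1] → [m,1] be monotone nonincreasing, and for i ∈ {1,2} let r_i : [0,1] → [0,1] be monotone nondecreasing, concave, and satisfy r_i(x) ≥ x for all x ∈ [0,1]. Define G(x,y) = r_2(y) if r_2(y) ≥ T(x), and G(x,y) = r_1(x) otherwise. Then the expectation of G(x,y) over (x,y) drawn uniformly from [0,1]^2 is at least (1+m)/2 - (1/2)·((1+m)/2)^2. -/
/-!
Fix `x` and put `t = T x`. By monotonicity, `{y ∈ [0, 1] | t ≤ r₂ y}` is an interval from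
some `a` to `1`: below `a` the integrand is `r₁ x ≥ x`, above `a` it is `r₂`, which by
concavity lies over the chord from `(a, t)` to `(1, 1)`. So the inner integral is at least
`a x + (1 - a)(1 + t)/2 ≥ min x ((1 + m)/2)`, and `∫₀¹ min x c = c - c²/2`.
-/

open MeasureTheory Set Filter Topology

theorem ConcaveOn.secant_le_of_forall_Ioo_le {f : ℝ → ℝ} {a b t y : ℝ}
    (hf : ConcaveOn ℝ (Icc a b) f) (ht : ∀ u ∈ Ioo a b, t ≤ f u) (hy : y ∈ Ioo a b) :
    (b - y) * t + (y - a) * f b ≤ (b - a) * f y := by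
  obtain ⟨hay, hyb⟩ := hy
  have hsecant : ∀ u ∈ Ioo a y, (b - y) * t + (y - u) * f b ≤ (b - u) * f y := by
    rintro u ⟨hau, huy⟩
    have hslope := hf.slope_anti_adjacent ⟨hau.le, by linarith⟩ ⟨by linarith, le_rfl⟩ huy hyb
    rw [div_le_div_iff₀ (by linarith) (by linarith)] at hslope
    nlinarith [ht u ⟨hau, huy.trans hyb⟩]
  -- `f a` itself may lie below `t` (a concave function can jump down at an endpoint),
  -- so the inequality at `a` is obtained as a limit from the right.
  have hlim : ∀ g : ℝ → ℝ, Continuous g → Tendsto g (𝓝[>] a) (𝓝 (g a)) := fun g hg =>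
    hg.continuousWithinAt.tendsto
  exact le_of_tendsto_of_tendsto (hlim (fun u => (b - y) * t + (y - u) * f b) (by fun_prop))
    (hlim (fun u => (b - u) * f y) (by fun_prop))
    (eventually_of_mem (Ioo_mem_nhdsGT hay) hsecant)

theorem ConcaveOn.trapezoid_le_intervalIntegral {f : ℝ → ℝ} {a b t : ℝ} (hab : a ≤ b)
    (hf : ConcaveOn ℝ (Icc a b) f) (ht : ∀ u ∈ Ioo a b, t ≤ f u)
    (hfi : IntervalIntegrable f volume a b) :
    (b - a) * (t + f b) / 2 ≤ ∫ x in a..b, f x := by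
  rcases hab.eq_or_lt with rfl | hab
  · simp
  have hchord : ∫ x in a..b, ((b - x) * t + (x - a) * f b) / (b - a)
      = (b - a) * (t + f b) / 2 := by
    rw [intervalIntegral.integral_div, intervalIntegral.integral_add
      (Continuous.intervalIntegrable (by fun_prop) _ _)
      (Continuous.intervalIntegrable (by fun_prop) _ _)]
    simp only [intervalIntegral.integral_mul_const,
      intervalIntegral.integral_comp_sub_left fun x => x, sub_self, integral_id, ne_eq,
      OfNat.ofNat_ne_zero, not_false_eq_true, zero_pow, sub_zero,
      intervalIntegral.intervalIntegrable_id, intervalIntegrable_const,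
      intervalIntegral.integral_sub, intervalIntegral.integral_const, smul_eq_mul]
    field_simp
    ring
  rw [← hchord]
  refine intervalIntegral.integral_mono_on_of_le_Ioo hab.le
    (Continuous.intervalIntegrable (by fun_prop) _ _) hfi fun x hx => ?_
  rw [div_le_iff₀ (sub_pos.2 hab), mul_comm (f x)]
  exact hf.secant_le_of_forall_Ioo_le ht hx

theorem integral_Icc_zero_one_min {c : ℝ} (hc : c ∈ Icc (0 : ℝ) 1) :
    ∫ x in Icc (0 : ℝ) 1, min x c = c - 1 / 2 * c ^ 2 := by
  have hleft : ∫ x in (0 : ℝ)..c, min x c = ∫ x in (0 : ℝ)..c, x :=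
    intervalIntegral.integral_congr fun x hx => min_eq_left (uIcc_of_le hc.1 ▸ hx).2
  have hright : ∫ x in c..1, min x c = ∫ x in c..1, c :=
    intervalIntegral.integral_congr fun x hx => min_eq_right (uIcc_of_le hc.2 ▸ hx).1
  rw [integral_Icc_eq_integral_Ioc, ← intervalIntegral.integral_of_le zero_le_one,
    ← intervalIntegral.integral_add_adjacent_intervals (b := c)
      (Continuous.intervalIntegrable (by fun_prop) _ _)
      (Continuous.intervalIntegrable (by fun_prop) _ _), hleft, hright]
  simp only [integral_id, ne_eq, OfNat.ofNat_ne_zero, not_false_eq_true, zero_pow, sub_zero,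
    intervalIntegral.integral_const, smul_eq_mul]
  ring

theorem min_le_setIntegral_ite_of_concaveOn {r : ℝ → ℝ} {t v : ℝ}
    (hr_mono : MonotoneOn r (Icc 0 1)) (hr_conc : ConcaveOn ℝ (Icc 0 1) r) (hr1 : 1 ≤ r 1)
    (ht : t ≤ 1) (hg : IntegrableOn (fun y => if t ≤ r y then r y else v) (Icc 0 1)) :
    min v ((1 + t) / 2) ≤ ∫ y in Icc 0 1, if t ≤ r y then r y else v := by
  set g : ℝ → ℝ := fun y => if t ≤ r y then r y else v
  set S : Set ℝ := {y ∈ Icc 0 1 | t ≤ r y}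
  have h1S : (1 : ℝ) ∈ S := ⟨⟨zero_le_one, le_rfl⟩, ht.trans hr1⟩
  have hSbdd : BddBelow S := ⟨0, fun y hy => hy.1.1⟩
  set a := sInf S
  have ha : a ∈ Icc (0 : ℝ) 1 := ⟨le_csInf ⟨1, h1S⟩ fun y hy => hy.1.1, csInf_le hSbdd h1S⟩
  have habove : ∀ y ∈ Ioo a 1, t ≤ r y := by
    intro y hy
    obtain ⟨w, hwS, hwy⟩ := exists_lt_of_csInf_lt ⟨1, h1S⟩ hy.1
    exact hwS.2.trans (hr_mono hwS.1 ⟨hwS.1.1.trans hwy.le, hy.2.le⟩ hwy.le)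
  have hbelow : ∀ y ∈ Ioo 0 a, g y = v := fun y hy =>
    if_neg fun hty => hy.2.not_ge (csInf_le hSbdd ⟨⟨hy.1.le, hy.2.le.trans ha.2⟩, hty⟩)
  have ha' : a ∈ uIcc 0 1 := by rwa [uIcc_of_le zero_le_one]
  have hgi : IntervalIntegrable g volume 0 1 :=
    (intervalIntegrable_iff_integrableOn_Icc_of_le zero_le_one).2 hg
  have hleft : a * v ≤ ∫ y in 0..a, g y :=
    calc a * v = ∫ _ in 0..a, v := by simp
      _ ≤ ∫ y in 0..a, g y := intervalIntegral.integral_mono_on_of_le_Ioo ha.1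
        intervalIntegrable_const (hgi.mono_set (uIcc_subset_uIcc_left ha'))
        fun y hy => (hbelow y hy).ge
  have hright : (1 - a) * (t + 1) / 2 ≤ ∫ y in a..1, g y := by
    have hIcc : Icc a 1 ⊆ Icc 0 1 := Icc_subset_Icc_left ha.1
    calc (1 - a) * (t + 1) / 2 ≤ (1 - a) * (t + r 1) / 2 := by
          gcongr; linarith [ha.2]
      _ ≤ ∫ y in a..1, r y :=
        (hr_conc.subset hIcc (convex_Icc a 1)).trapezoid_le_intervalIntegral ha.2 habove
          (hr_mono.mono (by rwa [uIcc_of_le ha.2])).intervalIntegrable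
      _ ≤ ∫ y in a..1, g y := intervalIntegral.integral_mono_on_of_le_Ioo ha.2
          (hr_mono.mono (by rwa [uIcc_of_le ha.2])).intervalIntegrable
          (hgi.mono_set (uIcc_subset_uIcc_right ha')) fun y hy => (if_pos (habove y hy)).ge
  rw [integral_Icc_eq_integral_Ioc, ← intervalIntegral.integral_of_le zero_le_one,
    ← intervalIntegral.integral_add_adjacent_intervals (hgi.mono_set (uIcc_subset_uIcc_left ha'))
      (hgi.mono_set (uIcc_subset_uIcc_right ha'))]
  nlinarith [min_le_left v ((1 + t) / 2), min_le_right v ((1 + t) / 2), ha.1, ha.2]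

section Extension

variable {α β : Type*} [LinearOrder α] [ConditionallyCompleteLinearOrder β] {f : α → β} {a b : α}

theorem MonotoneOn.exists_monotone_eqOn_Icc (hf : MonotoneOn f (Icc a b)) :
    ∃ g : α → β, Monotone g ∧ EqOn f g (Icc a b) :=
  hf.exists_monotone_extension (bddBelow_Icc.mono hf.image_Icc_subset)
    (bddAbove_Icc.mono hf.image_Icc_subset)

theorem AntitoneOn.exists_antitone_eqOn_Icc (hf : AntitoneOn f (Icc a b)) :
    ∃ g : α → β, Antitone g ∧ EqOn f g (Icc a b) :=
  hf.exists_antitone_extension (bddBelow_Icc.mono hf.image_Icc_subset)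
    (bddAbove_Icc.mono hf.image_Icc_subset)

end Extension

theorem IntegrableOn.of_eqOn_of_norm_le {α E : Type*} [MeasurableSpace α] [NormedAddCommGroup E]
    {μ : Measure α} {s : Set α} {f g : α → E} {C : ℝ} (hs : MeasurableSet s) (hμs : μ s ≠ ⊤)
    (hg : AEStronglyMeasurable g (μ.restrict s)) (hfg : EqOn f g s) (hf : ∀ x ∈ s, ‖f x‖ ≤ C) :
    IntegrableOn f s μ :=
  ⟨hg.congr ((ae_restrict_mem hs).mono fun _ hx => (hfg hx).symm),
    .restrict_of_bounded (C := C) hμs.lt_top ((ae_restrict_mem hs).mono hf)⟩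

theorem integrableOn_Icc_prod_Icc_ite {T r₁ r₂ : ℝ → ℝ} {a b c d : ℝ}
    (hT : AntitoneOn T (Icc a b)) (hr₁ : MonotoneOn r₁ (Icc a b)) (hr₂ : MonotoneOn r₂ (Icc c d)) :
    IntegrableOn (fun p : ℝ × ℝ => if T p.1 ≤ r₂ p.2 then r₂ p.2 else r₁ p.1)
      (Icc a b ×ˢ Icc c d) := by
  obtain ⟨T', hT'_anti, hTT'⟩ := hT.exists_antitone_eqOn_Icc
  obtain ⟨r₁', hr₁'_mono, hr₁r₁'⟩ := hr₁.exists_monotone_eqOn_Icc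
  obtain ⟨r₂', hr₂'_mono, hr₂r₂'⟩ := hr₂.exists_monotone_eqOn_Icc
  have hmeas : Measurable fun p : ℝ × ℝ => if T' p.1 ≤ r₂' p.2 then r₂' p.2 else r₁' p.1 :=
    Measurable.ite (measurableSet_le (hT'_anti.measurable.comp measurable_fst)
      (hr₂'_mono.measurable.comp measurable_snd))
      (hr₂'_mono.measurable.comp measurable_snd) (hr₁'_mono.measurable.comp measurable_fst)
  refine IntegrableOn.of_eqOn_of_norm_le (measurableSet_Icc.prod measurableSet_Icc)
    (isCompact_Icc.prod isCompact_Icc).measure_lt_top.ne hmeas.aestronglyMeasurable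
    (fun p hp => by simp only [hTT' hp.1, hr₁r₁' hp.1, hr₂r₂' hp.2])
    (C := max (max |r₁ a| |r₁ b|) (max |r₂ c| |r₂ d|)) fun p hp => ?_
  have h₁ := abs_le_max_abs_abs (hr₁.mapsTo_Icc hp.1).1 (hr₁.mapsTo_Icc hp.1).2
  have h₂ := abs_le_max_abs_abs (hr₂.mapsTo_Icc hp.2).1 (hr₂.mapsTo_Icc hp.2).2
  split_ifs
  · exact le_max_of_le_right h₂
  · exact le_max_of_le_left h₁

theorem trr_general (m : ℝ) (hm : m ∈ Set.Icc (0:ℝ) 1)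
    (T : ℝ → ℝ) (hT_range : ∀ x ∈ Set.Icc (0:ℝ) 1, T x ∈ Set.Icc m 1)
    (hT_mono : AntitoneOn T (Set.Icc (0:ℝ) 1))
    (r₁ r₂ : ℝ → ℝ)
    (hr₁_mono : MonotoneOn r₁ (Set.Icc (0:ℝ) 1))
    (hr₂_mono : MonotoneOn r₂ (Set.Icc (0:ℝ) 1))
    (hr₂_conc : ConcaveOn ℝ (Set.Icc (0:ℝ) 1) r₂)
    (hr₁_ge : ∀ x ∈ Set.Icc (0:ℝ) 1, r₁ x ≥ x)
    (hr₂_ge : ∀ x ∈ Set.Icc (0:ℝ) 1, r₂ x ≥ x)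
    (G : ℝ → ℝ → ℝ)
    (hG : ∀ x y, G x y = if r₂ y ≥ T x then r₂ y else r₁ x) :
    (∫ p in (Set.Icc (0:ℝ) 1) ×ˢ (Set.Icc (0:ℝ) 1), G p.1 p.2)
      ≥ (1 + m)/2 - 1/2 * ((1 + m)/2)^2 := by
  obtain rfl : G = fun x y => if T x ≤ r₂ y then r₂ y else r₁ x := funext₂ hG
  have hint : Integrable (fun p : ℝ × ℝ => if T p.1 ≤ r₂ p.2 then r₂ p.2 else r₁ p.1)
      ((volume.restrict (Icc 0 1)).prod (volume.restrict (Icc 0 1))) := by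
    rw [Measure.prod_restrict]
    exact integrableOn_Icc_prod_Icc_ite hT_mono hr₁_mono hr₂_mono
  rw [Measure.volume_eq_prod, ← Measure.prod_restrict, integral_prod _ hint, ge_iff_le,
    ← integral_Icc_zero_one_min ⟨by linarith [hm.1], by linarith [hm.2]⟩]
  refine setIntegral_mono_ae_restrict (Continuous.integrableOn_Icc (by fun_prop))
    hint.integral_prod_left ?_
  filter_upwards [hint.prod_right_ae, ae_restrict_mem measurableSet_Icc] with x hx_int hx
  calc min x ((1 + m) / 2) ≤ min (r₁ x) ((1 + T x) / 2) :=
        min_le_min (hr₁_ge x hx) (by linarith [(hT_range x hx).1])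
    _ ≤ _ := min_le_setIntegral_ite_of_concaveOn hr₂_mono hr₂_conc (hr₂_ge 1 ⟨zero_le_one, le_rfl⟩)
        (hT_range x hx).2 hx_int

/-- Sublemma "trr". -/
theorem trr (m : ℝ) (hm : m ∈ Set.Icc (0:ℝ) 1)
    (T : ℝ → ℝ) (hT_range : ∀ x ∈ Set.Icc (0:ℝ) 1, T x ∈ Set.Icc m 1)
    (hT_mono : AntitoneOn T (Set.Icc (0:ℝ) 1))
    (r₁ r₂ : ℝ → ℝ)
    (hr₁_mono : MonotoneOn r₁ (Set.Icc (0:ℝ) 1))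
    (hr₂_mono : MonotoneOn r₂ (Set.Icc (0:ℝ) 1))
    (hr₁_conc : ConcaveOn ℝ (Set.Icc (0:ℝ) 1) r₁)
    (hr₂_conc : ConcaveOn ℝ (Set.Icc (0:ℝ) 1) r₂)
    (hr₁_range : ∀ x ∈ Set.Icc (0:ℝ) 1, r₁ x ∈ Set.Icc (0:ℝ) 1)
    (hr₂_range : ∀ x ∈ Set.Icc (0:ℝ) 1, r₂ x ∈ Set.Icc (0:ℝ) 1)
    (hr₁_ge : ∀ x ∈ Set.Icc (0:ℝ) 1, r₁ x ≥ x)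
    (hr₂_ge : ∀ x ∈ Set.Icc (0:ℝ) 1, r₂ x ≥ x)
    (G : ℝ → ℝ → ℝ)
    (hG : ∀ x y, G x y = if r₂ y ≥ T x then r₂ y else r₁ x) :
    (∫ p in (Set.Icc (0:ℝ) 1) ×ˢ (Set.Icc (0:ℝ) 1), G p.1 p.2)
      ≥ (1 + m)/2 - 1/2 * ((1 + m)/2)^2 :=
  trr_general m hm T hT_range hT_mono r₁ r₂ hr₁_mono hr₂_mono hr₂_conc hr₁_ge hr₂_ge G hG
end

section
/- Let r : [0,1] → ℝ≥0 be a concave function with r(0)=0, r(1)=1, and r(q) ≤ 1 for all q (so the maximum of r is 1, attained at q=1). Suppose r(1/2) ≥ (1+δ)/2 for some δ ≥ 0. Then ∫_0^1 r(q)·2q dq ≥ 2/3 + δ/4. -/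
open MeasureTheory

lemma ffl_integrable (r : ℝ → ℝ)
    (hconc : ConcaveOn ℝ (Set.Icc (0:ℝ) 1) r)
    (hmax : ∀ q ∈ Set.Icc (0:ℝ) 1, r q ≤ 1)
    (hnonneg : ∀ q ∈ Set.Icc (0:ℝ) 1, 0 ≤ r q) :
    IntervalIntegrable (fun q => r q * (2*q)) volume 0 1 := by
  have hcont : ContinuousOn r (Set.Ioo (0:ℝ) 1) := by
    have := hconc.continuousOn_interior
    rwa [interior_Icc] at this
  rw [intervalIntegrable_iff_integrableOn_Ioo_of_le (by norm_num)]
  have hc2 : ContinuousOn (fun q : ℝ => 2*q) (Set.Ioo (0:ℝ) 1) :=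
    (continuous_const.mul continuous_id).continuousOn
  refine ⟨(hcont.mul hc2).aestronglyMeasurable measurableSet_Ioo,
    HasFiniteIntegral.restrict_of_bounded (C := 2) (by simp [Real.volume_Ioo]) ?_⟩
  · rw [ae_restrict_iff' measurableSet_Ioo]
    filter_upwards with q hq
    have hq' : q ∈ Set.Icc (0:ℝ) 1 := Set.Ioo_subset_Icc_self hq
    have h1 := hnonneg q hq'
    have h2 := hmax q hq'
    rw [Real.norm_eq_abs, abs_mul, abs_of_nonneg h1,
      abs_of_nonneg (by nlinarith [hq.1] : (0:ℝ) ≤ 2*q)]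
    nlinarith [hq.1, hq.2]

/-- if a concave revenue curve with r(0)=0, r(1)=1=max r satisfies
r(1/2) ≥ (1+δ)/2, then ∫₀¹ r(q)·2q dq ≥ 2/3 + δ/4. -/
theorem far_from_linear_bound (r : ℝ → ℝ) (δ : ℝ) (hδ : 0 ≤ δ)
    (hconc : ConcaveOn ℝ (Set.Icc (0:ℝ) 1) r)
    (hnonneg : ∀ q ∈ Set.Icc (0:ℝ) 1, 0 ≤ r q)
    (hr0 : r 0 = 0) (hr1 : r 1 = 1)
    (hmax : ∀ q ∈ Set.Icc (0:ℝ) 1, r q ≤ 1)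
    (hhalf : r (1/2) ≥ (1 + δ)/2) :
    (∫ q in (0:ℝ)..1, r q * (2*q)) ≥ 2/3 + δ/4 := by
  have hint : IntervalIntegrable (fun q => r q * (2*q)) volume 0 1 :=
    ffl_integrable r hconc hmax hnonneg
  have hint1 : IntervalIntegrable (fun q => r q * (2*q)) volume 0 (1/2) :=
    hint.mono_set (by rw [Set.uIcc_subset_uIcc_iff_le]; norm_num)
  have hint2 : IntervalIntegrable (fun q => r q * (2*q)) volume (1/2) 1 :=
    hint.mono_set (by rw [Set.uIcc_subset_uIcc_iff_le]; norm_num)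
  have hsplit : (∫ q in (0:ℝ)..1, r q * (2*q))
      = (∫ q in (0:ℝ)..(1/2), r q * (2*q)) + ∫ q in (1/2:ℝ)..1, r q * (2*q) :=
    (intervalIntegral.integral_add_adjacent_intervals hint1 hint2).symm
  have hhalfmem : (1/2:ℝ) ∈ Set.Icc (0:ℝ) 1 := by norm_num
  have h0mem : (0:ℝ) ∈ Set.Icc (0:ℝ) 1 := by norm_num
  have h1mem : (1:ℝ) ∈ Set.Icc (0:ℝ) 1 := by norm_num
  -- pointwise bounds from concavity
  have hb1 : ∀ q ∈ Set.Icc (0:ℝ) (1/2), (2+2*δ)*q^2 ≤ r q * (2*q) := by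
    intro q hq
    obtain ⟨hq0, hq2⟩ := hq
    have key := hconc.2 h0mem hhalfmem
      (by linarith : (0:ℝ) ≤ 1 - 2*q) (by linarith : (0:ℝ) ≤ 2*q) (by ring)
    have hxq : (1 - 2*q) • (0:ℝ) + (2*q) • (1/2:ℝ) = q := by
      simp only [smul_eq_mul]; ring
    rw [hxq] at key
    simp only [smul_eq_mul, hr0, mul_zero, zero_add] at key
    have ha : (2*q)*((1+δ)/2) ≤ (2*q)*r (1/2) :=
      mul_le_mul_of_nonneg_left hhalf (by linarith)
    have hb : ((2*q)*r (1/2))*(2*q) ≤ r q * (2*q) :=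
      mul_le_mul_of_nonneg_right (by linarith) (by linarith)
    have hc : ((2*q)*((1+δ)/2))*(2*q) ≤ ((2*q)*r (1/2))*(2*q) :=
      mul_le_mul_of_nonneg_right ha (by linarith)
    nlinarith [hb, hc]
  have hb2 : ∀ q ∈ Set.Icc (1/2:ℝ) 1, (2-2*δ)*q^2 + 2*δ*q ≤ r q * (2*q) := by
    intro q hq
    obtain ⟨hq1, hq2⟩ := hq
    have key := hconc.2 hhalfmem h1mem
      (by linarith : (0:ℝ) ≤ 2 - 2*q) (by linarith : (0:ℝ) ≤ 2*q - 1) (by ring)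
    have hxq : (2 - 2*q) • (1/2:ℝ) + (2*q - 1) • (1:ℝ) = q := by
      simp only [smul_eq_mul]; ring
    rw [hxq] at key
    simp only [smul_eq_mul, hr1, mul_one] at key
    have ha : (2-2*q)*((1+δ)/2) ≤ (2-2*q)*r (1/2) :=
      mul_le_mul_of_nonneg_left hhalf (by linarith)
    have hb : ((2-2*q)*r (1/2) + (2*q-1))*(2*q) ≤ r q * (2*q) :=
      mul_le_mul_of_nonneg_right key (by linarith)
    have hc : ((2-2*q)*((1+δ)/2) + (2*q-1))*(2*q) ≤ ((2-2*q)*r (1/2) + (2*q-1))*(2*q) :=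
      mul_le_mul_of_nonneg_right (by linarith) (by linarith)
    nlinarith [hb, hc]
  have hpoly1 : IntervalIntegrable (fun q : ℝ => (2+2*δ)*q^2) volume 0 (1/2) :=
    (continuous_const.mul (continuous_pow 2)).intervalIntegrable _ _
  have hpoly2 : IntervalIntegrable (fun q : ℝ => (2-2*δ)*q^2 + 2*δ*q) volume (1/2) 1 :=
    ((continuous_const.mul (continuous_pow 2)).add
      (continuous_const.mul continuous_id)).intervalIntegrable _ _
  have hle1 : (∫ q in (0:ℝ)..(1/2), (2+2*δ)*q^2) ≤ ∫ q in (0:ℝ)..(1/2), r q * (2*q) :=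
    intervalIntegral.integral_mono_on (by norm_num) hpoly1 hint1 hb1
  have hle2 : (∫ q in (1/2:ℝ)..1, (2-2*δ)*q^2 + 2*δ*q) ≤ ∫ q in (1/2:ℝ)..1, r q * (2*q) :=
    intervalIntegral.integral_mono_on (by norm_num) hpoly2 hint2 hb2
  have hv1 : (∫ q in (0:ℝ)..(1/2), (2+2*δ)*q^2) = (1+δ)/12 := by
    rw [intervalIntegral.integral_const_mul, integral_pow]
    norm_num; ring
  have hv2 : (∫ q in (1/2:ℝ)..1, (2-2*δ)*q^2 + 2*δ*q) = 7/12 + δ/6 := by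
    have hA : IntervalIntegrable (fun q : ℝ => (2-2*δ)*q^2) volume (1/2) 1 :=
      Continuous.intervalIntegrable (by fun_prop) _ _
    have hB : IntervalIntegrable (fun q : ℝ => 2*δ*q) volume (1/2) 1 :=
      Continuous.intervalIntegrable (by fun_prop) _ _
    rw [intervalIntegral.integral_add hA hB,
      intervalIntegral.integral_const_mul, intervalIntegral.integral_const_mul,
      integral_pow, integral_id]
    norm_num; ring
  rw [hsplit]
  rw [hv1] at hle1
  rw [hv2] at hle2
  linarith
end

section
/- For q* ∈ [2/3, 1), define f(q*) = (1/3)(1-q*)^2 - (1/4)(1-q*) - 1/2 - log(q*)/(2(1-q*)) + 0.528·q*^2 + q*(1-q*)·(1 - (q*/(2(1+q*)))^2). Then f(q*) > 0.509 for all q* ∈ [2/3, 1). -/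
set_option maxHeartbeats 1000000 in
/-- the explicit lower-bound function exceeds 0.509 on [2/3, 1). -/
theorem final_bound (qs : ℝ) (h : qs ∈ Set.Ico (2/3 : ℝ) 1) :
    (1/3) * (1 - qs)^2 - (1/4) * (1 - qs) - 1/2 - Real.log qs / (2 * (1 - qs))
      + 0.528 * qs^2 + qs * (1 - qs) * (1 - (qs / (2 * (1 + qs)))^2)
      > 0.509 := by
  obtain ⟨h1, h2⟩ := h
  have hq0 : 0 < qs := by linarith
  set t : ℝ := 1 - qs with ht
  have ht0 : 0 < t := by simp only [ht]; linarith
  have ht3 : t ≤ 1/3 := by simp only [ht]; linarith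
  have ht1 : t < 1 := by linarith
  have habs : |t| < 1 := by rw [abs_of_pos ht0]; exact ht1
  have hlog := Real.abs_log_sub_add_sum_range_le habs 8
  rw [abs_of_pos ht0] at hlog
  simp only [Finset.sum_range_succ, Finset.sum_range_zero] at hlog
  have hqs : (1 : ℝ) - t = qs := by simp [ht]
  -- upper bound for log qs
  have hub : Real.log qs ≤ -(t + t^2/2 + t^3/3 + t^4/4 + t^5/5 + t^6/6 + t^7/7 + t^8/8)
      + t^9 / (1 - t) := by
    have h' := (abs_le.mp hlog).2
    rw [← hqs]
    push_cast at h'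
    norm_num at h'
    linarith [h']
  -- the core polynomial inequality
  have hP : 0 < 38/125 - 313/125*t + 331/50*t^2 - 1523/250*t^3 + 298/125*t^4 - 359/750*t^5
      - 1/42*t^6 - 2/105*t^7 - 187/21*t^8 + 251/28*t^9 - 9/4*t^10 := by
    nlinarith [sq_nonneg (t - 0.289), mul_nonneg (sq_nonneg (t - 0.289)) ht0.le,
      mul_nonneg (mul_nonneg (sq_nonneg (t - 0.289)) ht0.le) ht0.le,
      mul_nonneg (sq_nonneg (t - 0.289)) (sub_nonneg.2 ht3),
      pow_pos ht0 6, pow_pos ht0 8, pow_pos ht0 9, pow_pos ht0 10,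
      mul_nonneg (pow_nonneg ht0.le 6) (sub_nonneg.2 ht3),
      mul_nonneg (pow_nonneg ht0.le 8) (sub_nonneg.2 ht3)]
  -- main bound with log replaced by its upper bound
  have hne1 : t ≠ 0 := ne_of_gt ht0
  have hne2 : (1:ℝ) - t ≠ 0 := by intro hc; rw [sub_eq_zero] at hc; linarith
  have hne3 : (2:ℝ) - t ≠ 0 := by intro hc; rw [sub_eq_zero] at hc; linarith
  have heq : (1/3) * t^2 - (1/4) * t - 1/2
      - (-(t + t^2/2 + t^3/3 + t^4/4 + t^5/5 + t^6/6 + t^7/7 + t^8/8) + t^9/(1-t)) / (2 * t)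
      + 0.528 * (1-t)^2 + (1-t) * t * (1 - ((1-t) / (2 * (2 - t)))^2) - 0.509
      = (38/125 - 313/125*t + 331/50*t^2 - 1523/250*t^3 + 298/125*t^4 - 359/750*t^5
        - 1/42*t^6 - 2/105*t^7 - 187/21*t^8 + 251/28*t^9 - 9/4*t^10)
        / (4 * (1 - t) * (2 - t)^2) := by
    rw [eq_div_iff (by positivity)]
    field_simp
    ring
  have hmain : (1/3) * t^2 - (1/4) * t - 1/2
      - (-(t + t^2/2 + t^3/3 + t^4/4 + t^5/5 + t^6/6 + t^7/7 + t^8/8) + t^9/(1-t)) / (2 * t)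
      + 0.528 * (1-t)^2 + (1-t) * t * (1 - ((1-t) / (2 * (2 - t)))^2) > 0.509 := by
    rw [gt_iff_lt, ← sub_pos, heq]
    have hlt : (0:ℝ) < 1 - t := by linarith
    exact div_pos hP (by positivity)
  have hdiv : Real.log qs / (2 * (1 - qs))
      ≤ (-(t + t^2/2 + t^3/3 + t^4/4 + t^5/5 + t^6/6 + t^7/7 + t^8/8) + t^9/(1-t)) / (2 * t) := by
    rw [← ht]
    exact (div_le_div_iff_of_pos_right (show (0:ℝ) < 2*t by linarith)).2 hub
  have hrest : (1/3)*(1-qs)^2 - (1/4)*(1-qs) - 1/2 + 0.528*qs^2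
        + qs*(1-qs)*(1-(qs/(2*(1+qs)))^2)
      = (1/3)*t^2 - (1/4)*t - 1/2 + 0.528*(1-t)^2
        + (1-t)*t*(1-((1-t)/(2*(2-t)))^2) := by
    rw [← hqs]
    ring
  linarith [hmain, hdiv, hrest.le, hrest.ge]
end

section
/- Let F be the regular distribution whose revenue curve in quantile space is r(q) = 10q for q ≤ 0.1 and r(q) = 1 for q > 0.1 (the equal-revenue distribution truncated at value 10, in the limit of vanishing spreading interval). Then the expected revenue of empirical revenue maximization with one sample is ERM(F,1) = ∫_0^1 r(q) dq = 19/20, the expected revenue with two samples is ERM(F,2) = 1 - (0.1)^2·(1/3) - 2·(0.1)·(0.8)·(1/2) = 11/12, and hence ERM(F,2) < ERM(F,1). -/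
/-!
For `q ≤ 1/10` the value `v(q) = 10` is constant, and for `q ≥ 1/10` the revenue `r(q) = 1` is
constant. So two samples earn the optimal revenue `1` unless one of them lies below `1/10` and
either both do (the tie is broken towards the larger quantile, earning `10 max q₁ q₂`) or the other
lies above `1/5` (its value `1/q₂ ≤ 5` is at most half of `10`, so the price `10` is posted, earning
`10 q₁`). Integrating first in `q₂` gives `5 q₁² + 8 q₁ + 3/20`, `1` or `19/20` according as `q₁`
lies in `(0, 1/10)`, `(1/10, 1/5)` or `(1/5, 1)`, and then `11/12` in total.
-/

open MeasureTheory Set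

/-- Revenue curve of the equal-revenue distribution truncated at value 10:
r(q) = min(10q, 1). -/
noncomputable def rTrunc (q : ℝ) : ℝ := min (10 * q) 1

/-- The corresponding value function v(q) = r(q)/q. -/
noncomputable def vTrunc (q : ℝ) : ℝ := rTrunc q / q

/-- The revenue obtained by ERM from two samples with quantiles `q₁, q₂` for the
truncated equal-revenue distribution: if the larger value is at least twice the
smaller, post the larger value, else post the smaller value; ties among equal
values are broken in favor of the larger quantile. -/
noncomputable def e₂Trunc (q₁ q₂ : ℝ) : ℝ :=
  if 2 * min (vTrunc q₁) (vTrunc q₂) ≤ max (vTrunc q₁) (vTrunc q₂) then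
    -- post the price with the higher value (tie → larger quantile)
    (if vTrunc q₂ < vTrunc q₁ then rTrunc q₁
     else if vTrunc q₁ < vTrunc q₂ then rTrunc q₂
     else rTrunc (max q₁ q₂))
  else
    -- post the price with the lower value (tie → larger quantile)
    (if vTrunc q₁ < vTrunc q₂ then rTrunc q₁
     else if vTrunc q₂ < vTrunc q₁ then rTrunc q₂
     else rTrunc (max q₁ q₂))

open intervalIntegral

theorem integral_eq_add_add_of_eqOn_Ioo {E : Type*} [NormedAddCommGroup E] [NormedSpace ℝ E]
    {f g₁ g₂ g₃ : ℝ → E} {a b c d : ℝ} (hab : a ≤ b) (hbc : b ≤ c) (hcd : c ≤ d)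
    (h₁ : EqOn f g₁ (Ioo a b)) (h₂ : EqOn f g₂ (Ioo b c)) (h₃ : EqOn f g₃ (Ioo c d))
    (hg₁ : IntervalIntegrable g₁ volume a b) (hg₂ : IntervalIntegrable g₂ volume b c)
    (hg₃ : IntervalIntegrable g₃ volume c d) :
    ∫ x in a..d, f x = (∫ x in a..b, g₁ x) + (∫ x in b..c, g₂ x) + ∫ x in c..d, g₃ x := by
  have hf₁ := hg₁.congr_uIoo (uIoo_of_le hab ▸ h₁.symm)
  have hf₂ := hg₂.congr_uIoo (uIoo_of_le hbc ▸ h₂.symm)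
  have hf₃ := hg₃.congr_uIoo (uIoo_of_le hcd ▸ h₃.symm)
  rw [← integral_add_adjacent_intervals (hf₁.trans hf₂) hf₃,
    ← integral_add_adjacent_intervals hf₁ hf₂, integral_congr_Ioo_of_le hab h₁,
    integral_congr_Ioo_of_le hbc h₂, integral_congr_Ioo_of_le hcd h₃]

theorem integral_max_left {a b q : ℝ} (hq : q ∈ Icc a b) :
    ∫ y in a..b, max q y = q * (q - a) + (b ^ 2 - q ^ 2) / 2 := by
  have hc : Continuous fun y : ℝ => max q y := by fun_prop
  rw [← integral_add_adjacent_intervals (hc.intervalIntegrable a q) (hc.intervalIntegrable q b),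
    integral_congr_Ioo_of_le hq.1 (g := fun _ => q) fun y hy => max_eq_left hy.2.le,
    integral_congr_Ioo_of_le hq.2 (g := fun y => y) fun y hy => max_eq_right hy.1.le,
    intervalIntegral.integral_const, integral_id, smul_eq_mul]
  ring

theorem setIntegral_Icc_prod_Icc {E : Type*} [NormedAddCommGroup E] [NormedSpace ℝ E]
    [CompleteSpace E] {f : ℝ × ℝ → E} {a b c d : ℝ} (hab : a ≤ b) (hcd : c ≤ d)
    (hf : IntegrableOn f (Icc a b ×ˢ Icc c d)) :
    ∫ p in Icc a b ×ˢ Icc c d, f p = ∫ x in a..b, ∫ y in c..d, f (x, y) := by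
  rw [Measure.volume_eq_prod] at hf ⊢
  simp only [setIntegral_prod _ hf, integral_Icc_eq_integral_Ioc, integral_of_le hab,
    integral_of_le hcd]

theorem continuous_rTrunc : Continuous rTrunc := by
  unfold rTrunc; fun_prop

theorem rTrunc_of_le {q : ℝ} (h : q ≤ 1/10) : rTrunc q = 10 * q :=
  min_eq_left (by linarith)

theorem rTrunc_of_ge {q : ℝ} (h : 1/10 ≤ q) : rTrunc q = 1 :=
  min_eq_right (by linarith)

theorem rTrunc_mem_Icc {q : ℝ} (hq : q ∈ Icc (0:ℝ) 1) : rTrunc q ∈ Icc (0:ℝ) 1 :=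
  ⟨le_min (by linarith [hq.1]) zero_le_one, min_le_right _ _⟩

theorem integral_rTrunc : ∫ q in (0:ℝ)..1, rTrunc q = 19/20 := by
  rw [integral_eq_add_add_of_eqOn_Ioo (b := 1/10) (c := 1/5) (g₁ := fun q => 10 * q)
    (g₂ := fun _ => 1) (g₃ := fun _ => 1) (by norm_num) (by norm_num) (by norm_num)
    (fun q hq => rTrunc_of_le hq.2.le) (fun q hq => rTrunc_of_ge hq.1.le)
    (fun q hq => rTrunc_of_ge (by linarith [hq.1]))
    ((continuous_const.mul continuous_id).intervalIntegrable _ _) intervalIntegrable_const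
    intervalIntegrable_const, intervalIntegral.integral_const_mul, integral_id]
  norm_num

theorem vTrunc_of_le {q : ℝ} (h0 : 0 < q) (h : q ≤ 1/10) : vTrunc q = 10 := by
  rw [vTrunc, rTrunc_of_le h, mul_div_cancel_right₀ _ h0.ne']

theorem vTrunc_of_ge {q : ℝ} (h : 1/10 ≤ q) : vTrunc q = q⁻¹ := by
  rw [vTrunc, rTrunc_of_ge h, one_div]

theorem e₂Trunc_comm (q₁ q₂ : ℝ) : e₂Trunc q₁ q₂ = e₂Trunc q₂ q₁ := by
  unfold e₂Trunc
  rw [min_comm, max_comm, max_comm q₁]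
  split_ifs <;> first | rfl | (exfalso; linarith)

theorem e₂Trunc_mem (q₁ q₂ : ℝ) :
    e₂Trunc q₁ q₂ ∈ ({rTrunc q₁, rTrunc q₂, rTrunc (max q₁ q₂)} : Set ℝ) := by
  unfold e₂Trunc
  split_ifs <;> simp

theorem e₂Trunc_mem_Icc {q₁ q₂ : ℝ} (h₁ : q₁ ∈ Icc (0:ℝ) 1) (h₂ : q₂ ∈ Icc (0:ℝ) 1) :
    e₂Trunc q₁ q₂ ∈ Icc (0:ℝ) 1 := by
  have hmax : max q₁ q₂ ∈ Icc (0:ℝ) 1 := ⟨le_max_of_le_left h₁.1, max_le h₁.2 h₂.2⟩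
  rcases e₂Trunc_mem q₁ q₂ with h | h | h <;> rw [h] <;> exact rTrunc_mem_Icc ‹_›

theorem e₂Trunc_of_vTrunc_eq {q₁ q₂ : ℝ} (h0 : 0 < vTrunc q₁) (h : vTrunc q₁ = vTrunc q₂) :
    e₂Trunc q₁ q₂ = rTrunc (max q₁ q₂) := by
  unfold e₂Trunc
  rw [← h, min_self, max_self, if_neg (by linarith), if_neg (lt_irrefl _), if_neg (lt_irrefl _)]

theorem e₂Trunc_of_two_mul_le {q₁ q₂ : ℝ} (h0 : 0 < vTrunc q₂)
    (h : 2 * vTrunc q₂ ≤ vTrunc q₁) : e₂Trunc q₁ q₂ = rTrunc q₁ := by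
  have hlt : vTrunc q₂ < vTrunc q₁ := by linarith
  unfold e₂Trunc
  rw [min_eq_right hlt.le, max_eq_left hlt.le, if_pos h, if_pos hlt]

theorem e₂Trunc_of_lt_of_lt_two_mul {q₁ q₂ : ℝ} (hlt : vTrunc q₂ < vTrunc q₁)
    (h : vTrunc q₁ < 2 * vTrunc q₂) : e₂Trunc q₁ q₂ = rTrunc q₂ := by
  unfold e₂Trunc
  rw [min_eq_right hlt.le, max_eq_left hlt.le, if_neg h.not_ge, if_neg hlt.not_gt, if_pos hlt]

theorem e₂Trunc_of_le_of_le {q₁ q₂ : ℝ} (h₁ : q₁ ∈ Ioc 0 (1/10)) (h₂ : q₂ ∈ Ioc 0 (1/10)) :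
    e₂Trunc q₁ q₂ = 10 * max q₁ q₂ := by
  rw [e₂Trunc_of_vTrunc_eq (by rw [vTrunc_of_le h₁.1 h₁.2]; norm_num)
      (by rw [vTrunc_of_le h₁.1 h₁.2, vTrunc_of_le h₂.1 h₂.2]),
    rTrunc_of_le (max_le h₁.2 h₂.2)]

theorem e₂Trunc_of_le_of_mem_Ioo {q₁ q₂ : ℝ} (h₁ : q₁ ∈ Ioc 0 (1/10))
    (h₂ : q₂ ∈ Ioo (1/10) (1/5)) : e₂Trunc q₁ q₂ = 1 := by
  have hq₂ : 0 < q₂ := by linarith [h₂.1]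
  rw [e₂Trunc_of_lt_of_lt_two_mul, rTrunc_of_ge h₂.1.le] <;>
    rw [vTrunc_of_le h₁.1 h₁.2, vTrunc_of_ge h₂.1.le]
  · rw [inv_lt_comm₀ hq₂ (by norm_num)]; linarith [h₂.1]
  · rw [lt_mul_inv_iff₀ hq₂]; linarith [h₂.2]

theorem e₂Trunc_of_le_of_ge {q₁ q₂ : ℝ} (h₁ : q₁ ∈ Ioc 0 (1/10)) (h₂ : 1/5 ≤ q₂) :
    e₂Trunc q₁ q₂ = 10 * q₁ := by
  have hq₂ : 0 < q₂ := by linarith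
  rw [e₂Trunc_of_two_mul_le, rTrunc_of_le h₁.2] <;>
    rw [vTrunc_of_ge (by linarith)]
  · positivity
  · rw [vTrunc_of_le h₁.1 h₁.2, mul_inv_le_iff₀ hq₂]; linarith

theorem e₂Trunc_of_ge_of_ge {q₁ q₂ : ℝ} (h₁ : 1/10 ≤ q₁) (h₂ : 1/10 ≤ q₂) :
    e₂Trunc q₁ q₂ = 1 := by
  have hmax : 1/10 ≤ max q₁ q₂ := h₁.trans (le_max_left _ _)
  simpa only [rTrunc_of_ge h₁, rTrunc_of_ge h₂, rTrunc_of_ge hmax, mem_insert_iff,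
    mem_singleton_iff, or_self] using e₂Trunc_mem q₁ q₂

theorem measurable_e₂Trunc : Measurable fun p : ℝ × ℝ => e₂Trunc p.1 p.2 := by
  have hv : Measurable vTrunc := continuous_rTrunc.measurable.div measurable_id
  have hr : Measurable rTrunc := continuous_rTrunc.measurable
  have v₁ : Measurable fun p : ℝ × ℝ => vTrunc p.1 := hv.comp measurable_fst
  have v₂ : Measurable fun p : ℝ × ℝ => vTrunc p.2 := hv.comp measurable_snd
  have r₁ : Measurable fun p : ℝ × ℝ => rTrunc p.1 := hr.comp measurable_fst
  have r₂ : Measurable fun p : ℝ × ℝ => rTrunc p.2 := hr.comp measurable_snd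
  have rmax : Measurable fun p : ℝ × ℝ => rTrunc (max p.1 p.2) :=
    hr.comp (measurable_fst.max measurable_snd)
  exact Measurable.ite (measurableSet_le ((v₁.min v₂).const_mul 2) (v₁.max v₂))
    (Measurable.ite (measurableSet_lt v₂ v₁) r₁ (Measurable.ite (measurableSet_lt v₁ v₂) r₂ rmax))
    (Measurable.ite (measurableSet_lt v₁ v₂) r₁ (Measurable.ite (measurableSet_lt v₂ v₁) r₂ rmax))

theorem integrableOn_e₂Trunc :
    IntegrableOn (fun p : ℝ × ℝ => e₂Trunc p.1 p.2) (Icc 0 1 ×ˢ Icc 0 1) := by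
  refine Measure.integrableOn_of_bounded (M := 1)
    (isCompact_Icc.prod isCompact_Icc).measure_lt_top.ne
    measurable_e₂Trunc.aestronglyMeasurable
    ((ae_restrict_iff' (measurableSet_Icc.prod measurableSet_Icc)).mpr (ae_of_all _ ?_))
  rintro ⟨q₁, q₂⟩ ⟨h₁, h₂⟩
  have h := e₂Trunc_mem_Icc h₁ h₂
  rw [Real.norm_eq_abs, abs_of_nonneg h.1]
  exact h.2

theorem integral_e₂Trunc_of_le {q : ℝ} (hq : q ∈ Ioc 0 (1/10)) :
    ∫ y in (0:ℝ)..1, e₂Trunc q y = 5 * q ^ 2 + 8 * q + 3/20 := by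
  rw [integral_eq_add_add_of_eqOn_Ioo (b := 1/10) (c := 1/5) (g₁ := fun y => 10 * max q y)
    (g₂ := fun _ => 1) (g₃ := fun _ => 10 * q) (by norm_num) (by norm_num) (by norm_num)
    (fun y hy => e₂Trunc_of_le_of_le hq ⟨hy.1, hy.2.le⟩)
    (fun y hy => e₂Trunc_of_le_of_mem_Ioo hq hy) (fun y hy => e₂Trunc_of_le_of_ge hq hy.1.le)
    ((continuous_const.mul (continuous_const.max continuous_id)).intervalIntegrable _ _)
    intervalIntegrable_const intervalIntegrable_const,
    intervalIntegral.integral_const_mul, integral_max_left ⟨hq.1.le, hq.2⟩]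
  simp only [sub_zero, one_div, inv_pow, intervalIntegral.integral_const, smul_eq_mul, mul_one,
    intervalIntegral.integral_const_mul]
  ring

theorem integral_e₂Trunc_of_mem_Ioo {q : ℝ} (hq : q ∈ Ioo (1/10) (1/5)) :
    ∫ y in (0:ℝ)..1, e₂Trunc q y = 1 := by
  rw [integral_congr_Ioo_of_le zero_le_one (g := fun _ => 1) ?_, intervalIntegral.integral_const]
  · simp
  intro y hy
  rcases le_total y (1/10) with h | h
  · rw [e₂Trunc_comm]
    exact e₂Trunc_of_le_of_mem_Ioo ⟨hy.1, h⟩ hq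
  · exact e₂Trunc_of_ge_of_ge hq.1.le h

theorem integral_e₂Trunc_of_ge {q : ℝ} (hq : 1/5 ≤ q) :
    ∫ y in (0:ℝ)..1, e₂Trunc q y = 19/20 := by
  have hq' : 1/10 ≤ q := by linarith
  rw [integral_eq_add_add_of_eqOn_Ioo (b := 1/10) (c := 1/5) (g₁ := fun y => 10 * y)
    (g₂ := fun _ => 1) (g₃ := fun _ => 1) (by norm_num) (by norm_num) (by norm_num)
    (fun y hy => (e₂Trunc_comm _ _).trans (e₂Trunc_of_le_of_ge ⟨hy.1, hy.2.le⟩ hq))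
    (fun y hy => e₂Trunc_of_ge_of_ge hq' hy.1.le)
    (fun y hy => e₂Trunc_of_ge_of_ge hq' (by linarith [hy.1]))
    ((continuous_const.mul continuous_id).intervalIntegrable _ _)
    intervalIntegrable_const intervalIntegrable_const,
    intervalIntegral.integral_const_mul, integral_id]
  norm_num

theorem setIntegral_e₂Trunc :
    ∫ p in Icc (0:ℝ) 1 ×ˢ Icc (0:ℝ) 1, e₂Trunc p.1 p.2 = 11/12 := by
  have hpoly : ∫ q in (0:ℝ)..1/10, (5 * q ^ 2 + 8 * q + 3/20) = 17/300 := by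
    rw [intervalIntegral.integral_add, intervalIntegral.integral_add,
      intervalIntegral.integral_const_mul, intervalIntegral.integral_const_mul, integral_pow,
      integral_id]
    · norm_num
    all_goals exact Continuous.intervalIntegrable (by fun_prop) _ _
  rw [setIntegral_Icc_prod_Icc zero_le_one zero_le_one integrableOn_e₂Trunc,
    integral_eq_add_add_of_eqOn_Ioo (b := 1/10) (c := 1/5)
    (g₁ := fun q => 5 * q ^ 2 + 8 * q + 3/20) (g₂ := fun _ => 1) (g₃ := fun _ => 19/20)
    (by norm_num) (by norm_num) (by norm_num)
    (fun q hq => integral_e₂Trunc_of_le ⟨hq.1, hq.2.le⟩)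
    (fun q hq => integral_e₂Trunc_of_mem_Ioo hq) (fun q hq => integral_e₂Trunc_of_ge hq.1.le)
    ((by fun_prop : Continuous fun q : ℝ => 5 * q ^ 2 + 8 * q + 3/20).intervalIntegrable _ _)
    intervalIntegrable_const intervalIntegrable_const, hpoly]
  norm_num

/-- for the truncated equal-revenue distribution,
ERM(F,1) = 19/20, ERM(F,2) = 11/12, and hence ERM(F,2) < ERM(F,1). -/
theorem two_samples_worse_than_one :
    (∫ q in (0:ℝ)..1, rTrunc q) = 19/20 ∧
    (∫ p in (Set.Icc (0:ℝ) 1) ×ˢ (Set.Icc (0:ℝ) 1), e₂Trunc p.1 p.2) = 11/12 ∧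
    (∫ p in (Set.Icc (0:ℝ) 1) ×ˢ (Set.Icc (0:ℝ) 1), e₂Trunc p.1 p.2)
      < ∫ q in (0:ℝ)..1, rTrunc q := by
  refine ⟨integral_rTrunc, setIntegral_e₂Trunc, ?_⟩
  rw [integral_rTrunc, setIntegral_e₂Trunc]
  norm_num
end
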